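/- arXiv:1711.01736 — 8 statements merged into one kernel-verified Lean document; each statement's English description precedes it below -/
import Mathlib

section
/- Let X and Y be frames, let (Y, J) be a modal space, and let g : Y → X be an injective frame homomorphism (g preserves finite meets, arbitrary joins, ⊤ and ⊥) that admits a left adjoint l : X → Y (i.e. l x ≤ y ↔ x ≤ g y for all x ∈ X, y ∈ Y). Define I : X → X by I(x) = g(J(l(x))). Then I is monotone and preserves arbitrary joins, so (X, I) is a modal space, and g(a →_J b) = g(a) →_I g(b) for all a, b ∈ Y. (This is the algebraic form of: if f : X → Y is a continuous surjection of locales whose inverse-image map f⁻¹ has a left adjoint f_!, then I = f⁻¹ ∘ J ∘ f_! makes (X, I) a modal space with f⁻¹(a →_J b) = f⁻¹(a) →_I f⁻¹(b).) -/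
/-- The weak implication of a modal space: `a →_J b := ⨆ {d | J d ⊓ a ≤ b}`. -/
def wimp {X : Type*} [Order.Frame X] (J : X → X) (a b : X) : X :=
  sSup {d : X | J d ⊓ a ≤ b}

/-- Let `X`, `Y` be frames, `(Y, J)` a modal space, and `g : Y → X` an injective frame
homomorphism admitting a left adjoint `l`.  With `I x := g (J (l x))`, the pair `(X, I)`
is a modal space (`I` is monotone and join-preserving) and `g` preserves the weak
implication: `g (a →_J b) = g a →_I g b`. -/
theorem stmt1 {X Y : Type*} [Order.Frame X] [Order.Frame Y]
    (J : Y → Y) (hJmono : Monotone J)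
    (hJjoin : ∀ S : Set Y, J (sSup S) = sSup (J '' S))
    (g : Y → X) (hginj : Function.Injective g)
    (hginf : ∀ a b : Y, g (a ⊓ b) = g a ⊓ g b)
    (hgsup : ∀ S : Set Y, g (sSup S) = sSup (g '' S))
    (hgtop : g ⊤ = ⊤) (hgbot : g ⊥ = ⊥)
    (l : X → Y) (hadj : ∀ (x : X) (y : Y), l x ≤ y ↔ x ≤ g y) :
    Monotone (fun x => g (J (l x))) ∧
    (∀ S : Set X, g (J (l (sSup S))) = sSup ((fun x => g (J (l x))) '' S)) ∧
    (∀ a b : Y, g (wimp J a b) = wimp (fun x => g (J (l x))) (g a) (g b)) := by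
  -- g is monotone
  have hgmono : Monotone g := by
    intro a b hab
    have : a ⊔ b = b := sup_eq_right.mpr hab
    have h2 : g a ⊔ g b = g b := by
      have := hgsup {a, b}
      simp [Set.image_pair] at this
      rw [← this, ‹a ⊔ b = b›]
    exact le_of_sup_eq h2
  -- g reflects order
  have hgrefl : ∀ a b : Y, g a ≤ g b → a ≤ b := by
    intro a b h
    have : g (a ⊓ b) = g a := by rw [hginf]; exact inf_eq_left.mpr h
    have := hginj this
    exact inf_eq_left.mp this
  -- l is monotone
  have hlmono : Monotone l := by
    intro a b hab
    exact (hadj a (l b)).mpr (le_trans hab ((hadj b (l b)).mp le_rfl))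
  -- l ∘ g = id
  have hlg : ∀ y : Y, l (g y) = y := by
    intro y
    have h1 : l (g y) ≤ y := (hadj (g y) y).mpr le_rfl
    have h2 : g y ≤ g (l (g y)) := (hadj (g y) (l (g y))).mp le_rfl
    exact le_antisymm h1 (hgrefl _ _ h2)
  -- l preserves sSup
  have hlsup : ∀ S : Set X, l (sSup S) = sSup (l '' S) := by
    intro S
    apply le_antisymm
    · rw [hadj]
      apply sSup_le
      intro x hx
      rw [← hadj]
      exact le_sSup ⟨x, hx, rfl⟩
    · apply sSup_le
      rintro _ ⟨x, hx, rfl⟩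
      exact hlmono (le_sSup hx)
  refine ⟨fun a b hab => hgmono (hJmono (hlmono hab)), ?_, ?_⟩
  · intro S
    rw [hlsup, hJjoin, hgsup, ← Set.image_comp, ← Set.image_comp]
    rfl
  · intro a b
    unfold wimp
    apply le_antisymm
    · rw [hgsup]
      apply sSup_le
      rintro _ ⟨d, hd, rfl⟩
      apply le_sSup
      show g (J (l (g d))) ⊓ g a ≤ g b
      rw [hlg, ← hginf]
      exact hgmono hd
    · apply sSup_le
      intro e he
      have he' : g (J (l e) ⊓ a) ≤ g b := by rw [hginf]; exact he
      have : J (l e) ⊓ a ≤ b := hgrefl _ _ he'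
      have hle : l e ≤ sSup {d : Y | J d ⊓ a ≤ b} := le_sSup this
      exact (hadj _ _).mp hle |>.trans (hgmono (le_refl _)) |>.trans le_rfl
end

section
/- Let X and Y be topological spaces with Y Alexandrov, let J be a monotone, arbitrary-union-preserving map on the open sets of Y, and let f : X → Y be a continuous surjection. Define f_!(U) := ⋂ {W open in Y | f(U) ⊆ W} (open since Y is Alexandrov) and I(U) := f⁻¹(J(f_!(U))) for open U ⊆ X. Then I is a monotone, arbitrary-union-preserving map on the open sets of X (so the opens of X with I form a modal space), and f⁻¹(V →_J V') = f⁻¹(V) →_I f⁻¹(V') for all open V, V' ⊆ Y, where V →_J V' := ⋃ {W open | J(W) ∩ V ⊆ V'}. -/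
open TopologicalSpace

/-- `f_!(U) := ⋂ {W open in Y | f(U) ⊆ W}`, open since `Y` is Alexandrov. -/
def fShriek {X Y : Type*} [TopologicalSpace X] [TopologicalSpace Y] [AlexandrovDiscrete Y]
    (f : X → Y) (U : Opens X) : Opens Y :=
  ⟨⋂ W ∈ {W : Opens Y | f '' (U : Set X) ⊆ (W : Set Y)}, (W : Set Y),
    isOpen_iInter₂ fun W _ => W.isOpen⟩

/-- The preimage of an open set under a continuous map, as an open set. -/
def preim {X Y : Type*} [TopologicalSpace X] [TopologicalSpace Y]
    (f : X → Y) (hf : Continuous f) (V : Opens Y) : Opens X :=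
  ⟨f ⁻¹' (V : Set Y), V.isOpen.preimage hf⟩

section aux
variable {X Y : Type*} [TopologicalSpace X] [TopologicalSpace Y] [AlexandrovDiscrete Y]
    (f : X → Y) (hf : Continuous f)

lemma image_subset_fShriek (U : Opens X) : f '' (U : Set X) ⊆ (fShriek f U : Set Y) :=
  Set.subset_iInter₂ fun _ hW => hW

lemma fShriek_le {U : Opens X} {W : Opens Y} (h : f '' (U : Set X) ⊆ (W : Set Y)) :
    fShriek f U ≤ W :=
  Set.iInter₂_subset W h

lemma gc : GaloisConnection (fShriek f) (preim f hf) := by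
  intro U W
  constructor
  · intro h x hx
    exact h (image_subset_fShriek f U ⟨x, hx, rfl⟩)
  · intro h
    exact fShriek_le f (Set.image_subset_iff.mpr h)

lemma coe_preim (V : Opens Y) : (preim f hf V : Set X) = f ⁻¹' (V : Set Y) := rfl

lemma preim_mono : Monotone (preim f hf) := fun _ _ h x hx => h hx

lemma preim_sSup (T : Set (Opens Y)) : preim f hf (sSup T) = sSup (preim f hf '' T) := by
  apply Opens.ext
  ext x
  simp [preim]

lemma preim_inf (V V' : Opens Y) :
    preim f hf (V ⊓ V') = preim f hf V ⊓ preim f hf V' := rfl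

lemma preim_le_iff (hsurj : Function.Surjective f) {V V' : Opens Y} :
    preim f hf V ≤ preim f hf V' ↔ V ≤ V' := by
  constructor
  · intro h y hy
    obtain ⟨x, rfl⟩ := hsurj y
    exact h hy
  · exact fun h x hx => h hx

lemma fShriek_preim (hsurj : Function.Surjective f) (V : Opens Y) :
    fShriek f (preim f hf V) = V := by
  apply le_antisymm
  · exact fShriek_le f (by rw [coe_preim, Set.image_preimage_eq _ hsurj])
  · intro y hy
    have := image_subset_fShriek f (preim f hf V)
    rw [coe_preim, Set.image_preimage_eq _ hsurj] at this
    exact this hy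

end aux

/-- Let `Y` be Alexandrov, `J` a monotone union-preserving map on the opens of `Y`, and
`f : X → Y` a continuous surjection.  Then `I(U) := f⁻¹(J(f_!(U)))` is monotone and
union-preserving on the opens of `X` (so the opens of `X` with `I` form a modal space),
and `f⁻¹(V →_J V') = f⁻¹(V) →_I f⁻¹(V')` for all opens `V, V'` of `Y`. -/
theorem stmt2 {X Y : Type*} [TopologicalSpace X] [TopologicalSpace Y] [AlexandrovDiscrete Y]
    (J : Opens Y → Opens Y) (hJmono : Monotone J)
    (hJjoin : ∀ S : Set (Opens Y), J (sSup S) = sSup (J '' S))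
    (f : X → Y) (hf : Continuous f) (hsurj : Function.Surjective f) :
    Monotone (fun U => preim f hf (J (fShriek f U))) ∧
    (∀ S : Set (Opens X),
      preim f hf (J (fShriek f (sSup S))) =
        sSup ((fun U => preim f hf (J (fShriek f U))) '' S)) ∧
    (∀ V V' : Opens Y,
      preim f hf (wimp J V V') =
        wimp (fun U => preim f hf (J (fShriek f U))) (preim f hf V) (preim f hf V')) := by
  have hgc := gc f hf
  refine ⟨fun U U' h => preim_mono f hf (hJmono (hgc.monotone_l h)), ?_, ?_⟩
  · intro S
    have h1 : fShriek f (sSup S) = sSup (fShriek f '' S) := by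
      rw [hgc.l_sSup, sSup_image]
    rw [h1, hJjoin, preim_sSup, Set.image_image, Set.image_image]
  · intro V V'
    apply le_antisymm
    · rw [wimp, preim_sSup]
      apply sSup_le
      rintro _ ⟨W, hW, rfl⟩
      apply le_sSup
      show preim f hf (J (fShriek f (preim f hf W))) ⊓ preim f hf V ≤ preim f hf V'
      rw [fShriek_preim f hf hsurj, ← preim_inf]
      exact preim_mono f hf hW
    · apply sSup_le
      intro d hd
      have hd' : preim f hf (J (fShriek f d)) ⊓ preim f hf V ≤ preim f hf V' := hd
      rw [← preim_inf] at hd'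
      have h2 : J (fShriek f d) ⊓ V ≤ V' := (preim_le_iff f hf hsurj).mp hd'
      calc d ≤ preim f hf (fShriek f d) := hgc.le_u_l d
        _ ≤ preim f hf (wimp J V V') := preim_mono f hf (le_sSup h2)
end

section
/- Let (X, J) be a modal space. Then X equipped with →_J is a Curry category if and only if (X, J) is temporal; that is, (for all a ∈ X, a ≤ ⊤ →_J a) if and only if (for all a ∈ X, J a ≤ a). -/
/-- A modal space `(X, J)` with its weak implication is a Curry category
(`a ≤ ⊤ →_J a` for all `a`) if and only if it is temporal (`J a ≤ a` for all `a`). -/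
theorem stmt6 {X : Type*} [Order.Frame X] (J : X → X)
    (hmono : Monotone J) (hjoin : ∀ S : Set X, J (sSup S) = sSup (J '' S)) :
    (∀ a : X, a ≤ wimp J ⊤ a) ↔ (∀ a : X, J a ≤ a) := by
  constructor
  · intro h a
    have h1 : J a ≤ J (wimp J ⊤ a) := hmono (h a)
    have h2 : J (wimp J ⊤ a) ≤ a := by
      rw [wimp, hjoin]
      apply sSup_le
      rintro x ⟨d, hd, rfl⟩
      simpa using hd
    exact h1.trans h2
  · intro h a
    apply le_sSup
    simpa using h a
end

section
/- For all natural numbers N and K there exists a natural number M such that every Hausdorff topological space X with at least M elements contains K pairwise disjoint nonempty open subsets each of which has at least N elements. -/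
universe u

/-- For all `N K : ℕ` there is `M : ℕ` such that every Hausdorff space with at least `M`
elements contains `K` pairwise disjoint nonempty open subsets, each with at least `N`
elements. -/
theorem stmt10 (N K : ℕ) :
    ∃ M : ℕ, ∀ (X : Type u) [TopologicalSpace X] [T2Space X],
      Nonempty (Fin M ↪ X) →
      ∃ U : Fin K → Set X,
        (∀ i, IsOpen (U i)) ∧
        (∀ i, (U i).Nonempty) ∧
        (Pairwise fun i j => Disjoint (U i) (U j)) ∧
        (∀ i, ∃ e : Fin N ↪ X, ∀ j, e j ∈ U i) := by
  refine ⟨K * (N + 1), fun X _ _ ⟨e⟩ => ?_⟩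
  obtain ⟨U, hU, hdis⟩ := (Set.finite_range e).t2_separation
  set p : Fin K → Fin (N + 1) → X := fun i j => e (finProdFinEquiv (i, j)) with hp
  have hpne : ∀ {i j i' j'}, (i, j) ≠ (i', j') → p i j ≠ p i' j' := by
    intro i j i' j' hne heq
    exact hne (finProdFinEquiv.injective (e.injective heq))
  refine ⟨fun i => ⋃ j : Fin (N + 1), U (p i j), fun i => isOpen_iUnion fun j => (hU _).2,
    fun i => ⟨p i 0, Set.mem_iUnion.2 ⟨0, (hU _).1⟩⟩, ?_, ?_⟩
  · intro i i' hii
    simp only [Set.disjoint_iUnion_left, Set.disjoint_iUnion_right]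
    intro j j'
    exact hdis (Set.mem_range_self _) (Set.mem_range_self _)
      (hpne (by simp [Prod.ext_iff]; exact fun h _ => hii h))
  · intro i
    refine ⟨⟨fun j => p i j.castSucc, fun a b hab => ?_⟩, fun j => Set.mem_iUnion.2 ⟨_, (hU _).1⟩⟩
    by_contra hne
    exact hpne (fun h => hne (Fin.castSucc_injective _ (Prod.ext_iff.1 h).2)) hab
end

section
/- For every natural number N there exists a natural number M such that for every Hausdorff topological space X with at least M elements and every finite tree T with at most N elements, there exists a continuous surjection from X onto T, where T carries the topology whose open sets are exactly the upward-closed subsets. -/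
/-!
Choose `|T|` distinct points of `X` with pairwise disjoint open neighbourhoods `V t`, send `V t`
to `t` and every other point to the root `⊥`. An upward-closed set containing the root is all
of `T`, and the preimage of one avoiding the root is the open set `⋃ t ∈ O, V t`.
-/

universe u v

/-- The topology on a preorder whose open sets are exactly the upward-closed subsets. -/
def upperTop (T : Type*) [Preorder T] : TopologicalSpace T where
  IsOpen s := IsUpperSet s
  isOpen_univ := isUpperSet_univ
  isOpen_inter := fun _ _ hs ht => hs.inter ht
  isOpen_sUnion := fun _ h => isUpperSet_sUnion h

open Function Set Topology

theorem exists_isOpen_pairwise_disjoint_of_injective {ι X : Type*} [Finite ι]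
    [TopologicalSpace X] [T2Space X] {g : ι → X} (hg : Injective g) :
    ∃ V : ι → Set X, (∀ i, g i ∈ V i ∧ IsOpen (V i)) ∧ Pairwise (Disjoint on V) :=
  (pairwise_disjoint_nhds.comp_of_injective hg).exists_mem_filter_basis_of_disjoint
    fun i => nhds_basis_opens (g i)

section IndexOrBot

variable {α X : Type*}

open Classical in
noncomputable def indexOrBot [Bot α] (V : α → Set X) (x : X) : α :=
  if h : ∃ i, x ∈ V i then h.choose else ⊥

theorem indexOrBot_eq_of_mem [Bot α] {V : α → Set X} (hV : Pairwise (Disjoint on V)) {x : X}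
    {i : α} (hx : x ∈ V i) : indexOrBot V x = i := by
  have h : ∃ j, x ∈ V j := ⟨i, hx⟩
  rw [indexOrBot, dif_pos h]
  by_contra hne
  exact (hV hne).notMem_of_mem_left h.choose_spec hx

theorem indexOrBot_eq_bot_of_forall_notMem [Bot α] {V : α → Set X} {x : X}
    (hx : ∀ i, x ∉ V i) : indexOrBot V x = ⊥ := by
  rw [indexOrBot, dif_neg (not_exists.2 hx)]

theorem preimage_indexOrBot_of_bot_notMem [Bot α] {V : α → Set X}
    (hV : Pairwise (Disjoint on V)) {s : Set α} (hs : ⊥ ∉ s) :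
    indexOrBot V ⁻¹' s = ⋃ i ∈ s, V i := by
  ext x
  simp only [mem_preimage, mem_iUnion, exists_prop]
  constructor
  · intro hx
    by_contra! hout
    have hbot : indexOrBot V x = ⊥ :=
      indexOrBot_eq_bot_of_forall_notMem fun i hi => hout i (indexOrBot_eq_of_mem hV hi ▸ hx) hi
    exact hs (hbot ▸ hx)
  · rintro ⟨i, hi, hxi⟩
    rwa [indexOrBot_eq_of_mem hV hxi]

theorem continuous_indexOrBot [Preorder α] [OrderBot α] [TopologicalSpace X] {V : α → Set X}
    (hV_open : ∀ i, IsOpen (V i)) (hV : Pairwise (Disjoint on V)) :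
    Continuous[_, upperTop α] (indexOrBot V) := by
  refine @continuous_def X α _ (upperTop α) _ |>.2 fun s (hs : IsUpperSet s) => ?_
  by_cases hbot : ⊥ ∈ s
  · rw [eq_univ_of_forall fun _ => hs bot_le hbot, preimage_univ]
    exact isOpen_univ
  · rw [preimage_indexOrBot_of_bot_notMem hV hbot]
    exact isOpen_biUnion fun i _ => hV_open i

theorem indexOrBot_surjective [Bot α] {V : α → Set X} (hV : Pairwise (Disjoint on V))
    (hne : ∀ i, (V i).Nonempty) : Surjective (indexOrBot V) := fun i =>
  let ⟨x, hx⟩ := hne i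
  ⟨x, indexOrBot_eq_of_mem hV hx⟩

end IndexOrBot

theorem exists_continuous_surjective_upperTop_of_embedding {α X : Type*} [Preorder α]
    [OrderBot α] [Finite α] [TopologicalSpace X] [T2Space X] (g : α ↪ X) :
    ∃ f : X → α, Continuous[_, upperTop α] f ∧ Surjective f := by
  obtain ⟨V, hgV, hV⟩ := exists_isOpen_pairwise_disjoint_of_injective g.injective
  exact ⟨indexOrBot V, continuous_indexOrBot (fun i => (hgV i).2) hV,
    indexOrBot_surjective hV fun i => ⟨g i, (hgV i).1⟩⟩

/-- For every `N` there is `M` such that every Hausdorff space with at least `M` elements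
admits a continuous surjection onto every finite tree with at most `N` elements (a finite
partial order with a least element in which the set of predecessors of any element is
linearly ordered, topologized by upward-closed sets). -/
theorem stmt11 (N : ℕ) :
    ∃ M : ℕ, ∀ (X : Type u) [TopologicalSpace X] [T2Space X],
      Nonempty (Fin M ↪ X) →
      ∀ (T : Type v) [PartialOrder T] [OrderBot T] [Fintype T],
        (∀ t a b : T, a ≤ t → b ≤ t → a ≤ b ∨ b ≤ a) →
        Fintype.card T ≤ N →
        ∃ f : X → T, @Continuous X T _ (upperTop T) f ∧ Function.Surjective f := by
  refine ⟨N, fun X _ _ ⟨e⟩ T _ _ _ _ hcard => ?_⟩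
  exact exists_continuous_surjective_upperTop_of_embedding
    (((Fintype.equivFin T).toEmbedding.trans (Fin.castLEEmb hcard)).trans e)
end

section
/- Let X be an infinite Hausdorff topological space. Then every finite tree T, equipped with the topology whose open sets are the upward-closed subsets, is a surjective continuous image of X; that is, there exists a continuous surjection f : X → T. -/
universe u v

/-- Every finite tree (a finite partial order with a least element in which the set of
predecessors of any element is linearly ordered, topologized by upward-closed sets) is a
surjective continuous image of any infinite Hausdorff space. -/
theorem stmt12 (X : Type u) [TopologicalSpace X] [T2Space X] [Infinite X]
    (T : Type v) [PartialOrder T] [OrderBot T] [Fintype T]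
    (htree : ∀ t a b : T, a ≤ t → b ≤ t → a ≤ b ∨ b ≤ a) :
    ∃ f : X → T, @Continuous X T _ (upperTop T) f ∧ Function.Surjective f := by
  classical
  -- embed T into X
  obtain ⟨ι⟩ : Nonempty (T ↪ X) :=
    ⟨((Fintype.equivFin T).toEmbedding.trans (Fin.valEmbedding)).trans (Infinite.natEmbedding X)⟩
  -- separate the images by disjoint open sets
  obtain ⟨V, hV, hVdisj⟩ := (Set.finite_range ι).t2_separation
  set U : T → Set X := fun t => V (ι t) with hU
  have hUo : ∀ t, IsOpen (U t) := fun t => (hV (ι t)).2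
  have hmem : ∀ t, ι t ∈ U t := fun t => (hV (ι t)).1
  have hdisj : ∀ s t : T, s ≠ t → Disjoint (U s) (U t) := by
    intro s t hst
    exact hVdisj (Set.mem_range_self s) (Set.mem_range_self t) (fun h => hst (ι.injective h))
  -- define f
  let f : X → T := fun x => if h : ∃ t, x ∈ U t then h.choose else ⊥
  have hf_mem : ∀ x t, x ∈ U t → f x = t := by
    intro x t hx
    have h : ∃ t, x ∈ U t := ⟨t, hx⟩
    have := h.choose_spec
    simp only [f, dif_pos h]
    by_contra hne
    exact (hdisj _ _ hne).ne_of_mem this hx rfl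
  have hf_not : ∀ x, (¬ ∃ t, x ∈ U t) → f x = ⊥ := fun x h => dif_neg h
  refine ⟨f, ?_, ?_⟩
  · rw [@continuous_def X T _ (upperTop T)]
    intro s hs
    -- hs : IsUpperSet s
    by_cases hb : (⊥ : T) ∈ s
    · have : s = Set.univ := Set.eq_univ_of_forall fun t => hs bot_le hb
      simp [this]
    · have : f ⁻¹' s = ⋃ t ∈ s, U t := by
        ext x
        simp only [Set.mem_preimage, Set.mem_iUnion]
        constructor
        · intro hx
          by_cases h : ∃ t, x ∈ U t
          · obtain ⟨t, ht⟩ := h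
            exact ⟨t, (hf_mem x t ht) ▸ hx, ht⟩
          · exact absurd (hf_not x h ▸ hx) hb
        · rintro ⟨t, hts, hxt⟩
          rw [hf_mem x t hxt]; exact hts
      rw [this]
      exact isOpen_biUnion fun t _ => hUo t
  · intro t
    exact ⟨ι t, hf_mem _ t (hmem t)⟩
end

section
/- Soundness of the minimal J-logic mJ with respect to modal spaces: if the sequent Γ ⊢ A is derivable in mJ, then for every modal space (X, J) and every valuation V of J-formulas in X, ⨅_{γ ∈ Γ} V(γ) ≤ V(A). -/
/-- J-formulas: propositional formulas with a unary modality `J`. -/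
inductive JForm : Type
  | atom (n : ℕ)
  | top
  | bot
  | and (A B : JForm)
  | or (A B : JForm)
  | imp (A B : JForm)
  | jmod (A : JForm)

/-- Sequent derivability in the minimal J-logic `mJ`. -/
inductive mJ : Multiset JForm → JForm → Prop
  | id (A : JForm) : mJ {A} A
  | F {A B : JForm} : mJ {A} B → mJ {A.jmod} B.jmod
  | cut {Γ₀ Γ₁ : Multiset JForm} {A B : JForm} :
      mJ Γ₀ A → mJ (A ::ₘ Γ₁) B → mJ (Γ₀ + Γ₁) B
  | top (Γ : Multiset JForm) : mJ Γ .top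
  | bot {Γ : Multiset JForm} (A : JForm) : mJ Γ .bot → mJ Γ A
  | andI {Γ₀ Γ₁ : Multiset JForm} {A B : JForm} :
      mJ Γ₀ A → mJ Γ₁ B → mJ (Γ₀ + Γ₁) (A.and B)
  | andE₀ {Γ : Multiset JForm} {A B : JForm} : mJ Γ (A.and B) → mJ Γ A
  | andE₁ {Γ : Multiset JForm} {A B : JForm} : mJ Γ (A.and B) → mJ Γ B
  | orI₀ {Γ : Multiset JForm} {A B : JForm} : mJ Γ A → mJ Γ (A.or B)
  | orI₁ {Γ : Multiset JForm} {A B : JForm} : mJ Γ B → mJ Γ (A.or B)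
  | orE {Γ₀ Γ₁ : Multiset JForm} {A B C : JForm} :
      mJ (A ::ₘ Γ₀) C → mJ (B ::ₘ Γ₁) C → mJ ((A.or B) ::ₘ (Γ₀ + Γ₁)) C
  | impE {Γ₀ Γ₁ : Multiset JForm} {A B : JForm} :
      mJ Γ₀ A → mJ Γ₁ ((A.imp B).jmod) → mJ (Γ₀ + Γ₁) B
  | impI {A B C : JForm} : mJ {C.jmod, A} B → mJ {C} (A.imp B)

/-- Valuation of J-formulas in a modal space `(X, J)`. -/
def JVal {X : Type*} [Order.Frame X] (J : X → X) (V : ℕ → X) : JForm → X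
  | .atom n => V n
  | .top => ⊤
  | .bot => ⊥
  | .and A B => JVal J V A ⊓ JVal J V B
  | .or A B => JVal J V A ⊔ JVal J V B
  | .imp A B => wimp J (JVal J V A) (JVal J V B)
  | .jmod A => J (JVal J V A)

lemma wimp_spec {X : Type*} [Order.Frame X] (J : X → X)
    (hjoin : ∀ S : Set X, J (sSup S) = sSup (J '' S)) (a b : X) :
    J (wimp J a b) ⊓ a ≤ b := by
  rw [wimp, hjoin, sSup_inf_eq]
  refine iSup₂_le ?_
  rintro x ⟨d, hd, rfl⟩
  exact hd


/-- Soundness of the minimal J-logic `mJ` for modal spaces: if `Γ ⊢ A` is derivable in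
`mJ` then `⨅_{γ ∈ Γ} V(γ) ≤ V(A)` in every modal space and valuation. -/
theorem stmt15 {Γ : Multiset JForm} {A : JForm} (h : mJ Γ A)
    {X : Type*} [Order.Frame X] (J : X → X)
    (hmono : Monotone J) (hjoin : ∀ S : Set X, J (sSup S) = sSup (J '' S))
    (V : ℕ → X) : (Γ.map (JVal J V)).inf ≤ JVal J V A := by
  induction h with
  | id A => simp
  | F h ih =>
      simp only [Multiset.map_singleton, Multiset.inf_singleton] at ih ⊢
      exact hmono ih
  | cut h0 h1 ih0 ih1 =>
      simp only [Multiset.map_add, Multiset.inf_add, Multiset.map_cons,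
        Multiset.inf_cons] at *
      calc _ ≤ JVal J V _ ⊓ _ := inf_le_inf_right _ ih0
        _ ≤ _ := ih1
  | top Γ => simp [JVal]
  | bot A h ih => exact ih.trans (by simp [JVal])
  | andI h0 h1 ih0 ih1 =>
      simp only [Multiset.map_add, Multiset.inf_add, JVal]
      exact le_inf (inf_le_left.trans ih0) (inf_le_right.trans ih1)
  | andE₀ h ih => exact ih.trans inf_le_left
  | andE₁ h ih => exact ih.trans inf_le_right
  | orI₀ h ih => exact ih.trans le_sup_left
  | orI₁ h ih => exact ih.trans le_sup_right
  | orE h0 h1 ih0 ih1 =>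
      simp only [Multiset.map_add, Multiset.inf_add, Multiset.map_cons,
        Multiset.inf_cons, JVal] at *
      rw [inf_sup_right]
      apply sup_le
      · exact le_trans (inf_le_inf_left _ inf_le_left) ih0
      · exact le_trans (inf_le_inf_left _ inf_le_right) ih1
  | impE h0 h1 ih0 ih1 =>
      simp only [Multiset.map_add, Multiset.inf_add, JVal] at *
      calc _ ≤ JVal J V _ ⊓ J (wimp J (JVal J V _) (JVal J V _)) :=
            inf_le_inf ih0 ih1
        _ ≤ _ := by rw [inf_comm]; exact wimp_spec J hjoin _ _
  | impI h ih =>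
      simp only [Multiset.insert_eq_cons, Multiset.map_cons, Multiset.inf_cons,
        Multiset.map_singleton, Multiset.inf_singleton, JVal] at *
      exact le_sSup ih
end

section
/- Let E and F be categories with finite products, let f^* : F ⥤ E be a fully faithful functor preserving finite products that admits a left adjoint f_! : E ⥤ F, let J : F ⥤ F be a functor, and suppose F has weak exponentials for J, i.e. there is a functor [-,-]_J : Fᵒᵖ × F ⥤ F with bijections Hom_F(J(C) × A, B) ≅ Hom_F(C, [A, B]_J) natural in A, B, C. Define I : E ⥤ E by I(C) = f^*(J(f_!(C))). Then there are bijections Hom_E(I(C) × f^*(A), f^*(B)) ≅ Hom_E(C, f^*([A, B]_J)) natural in C, A and B; that is, f^*([A, B]_J) is a weak exponential of f^*(A) and f^*(B) with respect to I, so f^* preserves the weak implication: f^*(A →_J B) ≅ f^*(A) →_I f^*(B). -/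
/-!
Since `f^*` preserves binary products, `I C ⨯ f^* A ≅ f^*(J (f_! C) ⨯ A)`. Full faithfulness of
`f^*` identifies maps from this object to `f^* B` with maps `J (f_! C) ⨯ A ⟶ B` in `F`, and the
composite adjunction `f_! ⋙ (J (-) ⨯ A) ⊣ [A, -]_J ⋙ f^*` turns these into maps
`C ⟶ f^*[A, B]_J`. Each identification is natural, hence so is the composite.
-/

open CategoryTheory CategoryTheory.Limits Opposite

universe v u

namespace CategoryTheory

section

variable {C D : Type*} [Category C] [Category D] [HasBinaryProducts C] [HasBinaryProducts D]
  (G : C ⥤ D) [PreservesLimitsOfShape (Discrete WalkingPair) G]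

noncomputable def prodFlipComparisonIso (A : C) :
    prod.functor.flip.obj A ⋙ G ≅ G ⋙ prod.functor.flip.obj (G.obj A) :=
  NatIso.ofComponents (fun X => PreservesLimitPair.iso G X A) fun f => by
    have h := prodComparison_natural G f (𝟙 A)
    rwa [G.map_id] at h

end

namespace Adjunction

variable {C D D' : Type*} [Category C] [Category D] [Category D'] {L : C ⥤ D} {R : D ⥤ C}
  (adj : L ⊣ R) {G : D ⥤ D'} (hG : G.FullyFaithful) {L' : C ⥤ D'} (i : L' ≅ L ⋙ G)

def homEquivOfFullyFaithful (c : C) (d : D) : (L'.obj c ⟶ G.obj d) ≃ (c ⟶ R.obj d) :=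
  ((i.app c).homCongr (Iso.refl _)).trans (hG.homEquiv.symm.trans (adj.homEquiv c d))

theorem homEquivOfFullyFaithful_naturality_left {c c' : C} (g : c' ⟶ c) {d : D}
    (k : L'.obj c ⟶ G.obj d) :
    adj.homEquivOfFullyFaithful hG i c' d (L'.map g ≫ k) =
      g ≫ adj.homEquivOfFullyFaithful hG i c d k := by
  simp only [homEquivOfFullyFaithful, Equiv.trans_apply, Iso.homCongr_apply, Iso.app_inv,
    Iso.refl_hom, Category.comp_id, Functor.FullyFaithful.homEquiv_symm_apply,
    ← adj.homEquiv_naturality_left]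
  rw [← i.inv.naturality_assoc, Functor.comp_map, hG.preimage_comp, hG.preimage_map]

theorem homEquivOfFullyFaithful_naturality_right {c : C} {d d' : D} (h : d ⟶ d')
    (k : L'.obj c ⟶ G.obj d) :
    adj.homEquivOfFullyFaithful hG i c d' (k ≫ G.map h) =
      adj.homEquivOfFullyFaithful hG i c d k ≫ R.map h := by
  simp only [homEquivOfFullyFaithful, Equiv.trans_apply, Iso.homCongr_apply, Iso.app_inv,
    Iso.refl_hom, Category.comp_id, Functor.FullyFaithful.homEquiv_symm_apply,
    ← adj.homEquiv_naturality_right]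
  rw [← Category.assoc, hG.preimage_comp, hG.preimage_map]

end Adjunction

end CategoryTheory

/-- Let `f^* : F ⥤ E` be fully faithful, preserve finite products and admit a left
adjoint `f_!`, and let `(F, J)` have weak exponentials `[-,-]_J`, i.e. for every `A` the
functor `C ↦ J C ⨯ A` is left adjoint to `B ↦ [A, B]_J`.  With `I := f_! ⋙ J ⋙ f^*`,
there are bijections `Hom_E(I C ⨯ f^* A, f^* B) ≅ Hom_E(C, f^*([A, B]_J))` natural in
`C` and `B` (for every `A`); that is, `f^*` preserves the weak implication:
`f^*([A,B]_J)` is a weak exponential of `f^* A` and `f^* B` with respect to `I`. -/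
theorem stmt19 {E : Type u} {F : Type u} [Category.{v} E] [Category.{v} F]
    [HasFiniteProducts E] [HasFiniteProducts F]
    (fstar : F ⥤ E) [fstar.Full] [fstar.Faithful] [PreservesFiniteProducts fstar]
    (fshriek : E ⥤ F) (adj : fshriek ⊣ fstar)
    (J : F ⥤ F) (H : Fᵒᵖ × F ⥤ F)
    (hH : ∀ A : F, Nonempty ((J ⋙ prod.functor.flip.obj A) ⊣ (Functor.curry.obj H).obj (op A))) :
    ∀ A : F,
      ∃ e : ∀ (C : E) (B : F),
          (((fshriek ⋙ J ⋙ fstar) ⋙ prod.functor.flip.obj (fstar.obj A)).obj C ⟶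
              fstar.obj B) ≃
            (C ⟶ ((Functor.curry.obj H).obj (op A) ⋙ fstar).obj B),
        (∀ (C C' : E) (g : C' ⟶ C) (B : F)
            (k : ((fshriek ⋙ J ⋙ fstar) ⋙ prod.functor.flip.obj (fstar.obj A)).obj C ⟶
              fstar.obj B),
          e C' B (((fshriek ⋙ J ⋙ fstar) ⋙
              prod.functor.flip.obj (fstar.obj A)).map g ≫ k) = g ≫ e C B k) ∧
        (∀ (C : E) (B B' : F) (h : B ⟶ B')
            (k : ((fshriek ⋙ J ⋙ fstar) ⋙ prod.functor.flip.obj (fstar.obj A)).obj C ⟶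
              fstar.obj B),
          e C B' (k ≫ fstar.map h) =
            e C B k ≫ ((Functor.curry.obj H).obj (op A) ⋙ fstar).map h) := by
  intro A
  obtain ⟨adjH⟩ := hH A
  let i : (fshriek ⋙ J ⋙ fstar) ⋙ prod.functor.flip.obj (fstar.obj A) ≅
      (fshriek ⋙ J ⋙ prod.functor.flip.obj A) ⋙ fstar :=
    Functor.isoWhiskerLeft (fshriek ⋙ J) (prodFlipComparisonIso fstar A).symm
  let adjA := adj.comp adjH
  let hf := Functor.FullyFaithful.ofFullyFaithful fstar
  exact ⟨adjA.homEquivOfFullyFaithful hf i,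
    fun _ _ g _ k => adjA.homEquivOfFullyFaithful_naturality_left hf i g k,
    fun _ _ _ h k => adjA.homEquivOfFullyFaithful_naturality_right hf i h k⟩
end
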